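/- Let m, n be positive integers, r = min(m,n), and K a positive integer. Let d ∈ ℝ^K with d_k ≥ 0, α_k ∈ ℝ^m with ‖α_k‖₂ ≤ 1, and β_k ∈ ℝ^n with ‖β_k‖₂ ≤ 1 for all k ∈ {1,…,K}. Then there exist σ ∈ ℝ^r with σ_k ≥ 0, an orthonormal family (u_1,…,u_r) in ℝ^m, and an orthonormal family (v_1,…,v_r) in ℝ^n such that Σ_{k=1}^r σ_k u_k v_kᵀ = Σ_{k=1}^K d_k α_k β_kᵀ and Σ_{k=1}^r σ_k ≤ Σ_{k=1}^K d_k. (Replacement lemma: any feasible point of P2 can be replaced by an SVD-form feasible point with objective value at least as small.) -/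

import Mathlib

open scoped BigOperators

/-- The Euclidean (ℓ²) norm of a vector in `ℝ^m`. -/
noncomputable def l2norm {m : ℕ} (x : Fin m → ℝ) : ℝ := Real.sqrt (∑ i, x i ^ 2)

/-- `∑ k, d k • (α k) (β k)ᵀ`, a sum of scaled rank-one matrices. -/
noncomputable def rankOneSum {m n K : ℕ} (d : Fin K → ℝ) (α : Fin K → Fin m → ℝ)
    (β : Fin K → Fin n → ℝ) : Matrix (Fin m) (Fin n) ℝ :=
  ∑ k, d k • Matrix.vecMulVec (α k) (β k)

/-- A family of vectors of `ℝ^m` is orthonormal when pairwise Euclidean inner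
products are `1` on the diagonal and `0` off the diagonal. -/
def OrthonormalFamily {r m : ℕ} (u : Fin r → Fin m → ℝ) : Prop :=
  ∀ i j, (∑ t, u i t * u j t) = if i = j then 1 else 0

/-!
Write `A = ∑ₖ dₖ αₖ βₖᵀ`. For an orthonormal eigenbasis `(vⱼ)` of `AᵀA` the vectors `A vⱼ` are
pairwise orthogonal; normalizing the nonzero ones and completing gives an orthonormal `(uⱼ)` with
`A vⱼ = ‖A vⱼ‖ uⱼ`, hence an SVD `A = ∑ⱼ σⱼ uⱼ vⱼᵀ` (when `m < n`, apply this to `Aᵀ`). Then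
`σⱼ = uⱼᵀ A vⱼ = ∑ₖ dₖ ⟨uⱼ, αₖ⟩ ⟨βₖ, vⱼ⟩`, and by Cauchy–Schwarz and Bessel's inequality
`∑ⱼ ⟨uⱼ, αₖ⟩ ⟨βₖ, vⱼ⟩ ≤ ‖αₖ‖ ‖βₖ‖ ≤ 1`, so `∑ⱼ σⱼ ≤ ∑ₖ dₖ`.
-/

theorem Orthonormal.exists_orthonormal_extension_of_card_le {𝕜 E ι : Type*} [RCLike 𝕜]
    [NormedAddCommGroup E] [InnerProductSpace 𝕜 E] [FiniteDimensional 𝕜 E] [Fintype ι]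
    (hcard : Fintype.card ι ≤ Module.finrank 𝕜 E) {v : ι → E} {s : Set ι}
    (hv : Orthonormal 𝕜 (s.domRestrict v)) :
    ∃ u : ι → E, Orthonormal 𝕜 u ∧ ∀ i ∈ s, u i = v i := by
  obtain ⟨e⟩ : Nonempty (ι ↪ Fin (Module.finrank 𝕜 E)) :=
    Function.Embedding.nonempty_of_card_le (by simpa using hcard)
  set v' : Fin (Module.finrank 𝕜 E) → E := Function.extend e v 0
  have hv'e : ∀ i, v' (e i) = v i := e.injective.extend_apply v 0
  have hv' : Orthonormal 𝕜 ((e '' s).domRestrict v') := by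
    refine ⟨?_, ?_⟩
    · rintro ⟨_, i, hi, rfl⟩
      simpa [hv'e] using hv.1 ⟨i, hi⟩
    · rintro ⟨_, i, hi, rfl⟩ ⟨_, j, hj, rfl⟩ hij
      simpa [hv'e] using hv.2 (i := ⟨i, hi⟩) (j := ⟨j, hj⟩) fun h => hij (by simp_all)
  obtain ⟨b, hb⟩ := hv'.exists_orthonormalBasis_extension_of_card_eq (by simp)
  exact ⟨b ∘ e, b.orthonormal.comp e e.injective, fun i hi =>
    (hb (e i) (Set.mem_image_of_mem e hi)).trans (hv'e i)⟩

theorem exists_orthonormal_forall_eq_norm_smul {𝕜 E ι : Type*} [RCLike 𝕜]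
    [NormedAddCommGroup E] [InnerProductSpace 𝕜 E] [FiniteDimensional 𝕜 E] [Fintype ι]
    (hcard : Fintype.card ι ≤ Module.finrank 𝕜 E) {w : ι → E}
    (hw : Pairwise fun i j => inner 𝕜 (w i) (w j) = 0) :
    ∃ u : ι → E, Orthonormal 𝕜 u ∧ ∀ i, w i = (‖w i‖ : 𝕜) • u i := by
  set s : Set ι := {i | w i ≠ 0}
  have hnormalized : Orthonormal 𝕜 (s.domRestrict fun i => (‖w i‖⁻¹ : 𝕜) • w i) := by
    refine ⟨fun i => ?_, fun i j hij => ?_⟩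
    · simp [norm_smul, inv_mul_cancel₀ (norm_ne_zero_iff.mpr i.2)]
    · simp [inner_smul_left, inner_smul_right, hw (Subtype.coe_ne_coe.mpr hij)]
  obtain ⟨u, hu, hus⟩ := hnormalized.exists_orthonormal_extension_of_card_le hcard
  refine ⟨u, hu, fun i => ?_⟩
  by_cases hi : w i = 0
  · simp [hi]
  · rw [hus i hi, smul_smul, mul_inv_cancel₀ (by simpa using hi), one_smul]

theorem Orthonormal.sqrt_sum_inner_sq_le {E ι : Type*} [NormedAddCommGroup E]
    [InnerProductSpace ℝ E] [Fintype ι] {w : ι → E} (hw : Orthonormal ℝ w) (x : E) :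
    √(∑ i, inner ℝ (w i) x ^ 2) ≤ ‖x‖ := by
  refine Real.sqrt_le_iff.mpr ⟨norm_nonneg x, ?_⟩
  simpa only [Real.norm_eq_abs, sq_abs] using hw.sum_inner_products_le x (s := Finset.univ)

theorem Orthonormal.sum_inner_mul_inner_le {E F ι : Type*} [NormedAddCommGroup E]
    [InnerProductSpace ℝ E] [NormedAddCommGroup F] [InnerProductSpace ℝ F] [Fintype ι]
    {u : ι → E} {v : ι → F} (hu : Orthonormal ℝ u) (hv : Orthonormal ℝ v) (x : E) (y : F) :
    ∑ i, inner ℝ (u i) x * inner ℝ (v i) y ≤ ‖x‖ * ‖y‖ :=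
  (Real.sum_mul_le_sqrt_mul_sqrt _ _ _).trans <|
    mul_le_mul (hu.sqrt_sum_inner_sq_le x) (hv.sqrt_sum_inner_sq_le y) (Real.sqrt_nonneg _)
      (norm_nonneg x)

open Matrix WithLp

theorem OrthonormalBasis.sum_vecMulVec_self {ι : Type*} [Fintype ι] [DecidableEq ι]
    (b : OrthonormalBasis ι ℝ (EuclideanSpace ℝ ι)) :
    ∑ j, vecMulVec (b j : ι → ℝ) (b j) = 1 := by
  refine ext_iff_mulVec.mpr fun x => ?_
  have := congrArg ofLp (b.sum_repr' (toLp 2 x))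
  simp only [WithLp.ofLp_sum, WithLp.ofLp_smul, EuclideanSpace.inner_eq_star_dotProduct] at this
  simpa [sum_mulVec, vecMulVec_mulVec, dotProduct_comm] using this

theorem Matrix.eq_sum_vecMulVec_mulVec {m ι : Type*} [Fintype ι]
    (A : Matrix m ι ℝ) (b : OrthonormalBasis ι ℝ (EuclideanSpace ℝ ι)) :
    A = ∑ j, vecMulVec (A *ᵥ b j) (b j) := by
  classical
  simp only [← mul_vecMulVec, ← Matrix.mul_sum, b.sum_vecMulVec_self, Matrix.mul_one]

theorem Matrix.dotProduct_mulVec_eigenvectorBasis {m ι : Type*} [Fintype m] [Fintype ι]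
    [DecidableEq ι] (A : Matrix m ι ℝ) (hA : (Aᵀ * A).IsHermitian) (i j : ι) :
    (A *ᵥ hA.eigenvectorBasis i) ⬝ᵥ (A *ᵥ hA.eigenvectorBasis j) =
      if i = j then hA.eigenvalues j else 0 := by
  have horth := orthonormal_iff_ite.mp hA.eigenvectorBasis.orthonormal j i
  rw [EuclideanSpace.inner_eq_star_dotProduct, star_trivial] at horth
  rw [dotProduct_mulVec, vecMul_mulVec, ← dotProduct_mulVec, hA.mulVec_eigenvectorBasis,
    dotProduct_smul, horth, smul_eq_mul, mul_ite, mul_one, mul_zero]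
  exact if_congr eq_comm rfl rfl

theorem l2norm_eq_norm {m : ℕ} (x : Fin m → ℝ) : l2norm x = ‖toLp 2 x‖ := by
  simp [l2norm, EuclideanSpace.norm_eq]

theorem orthonormalFamily_iff_orthonormal {r m : ℕ} (u : Fin r → Fin m → ℝ) :
    OrthonormalFamily u ↔ Orthonormal ℝ (fun i => toLp 2 (u i)) := by
  rw [orthonormal_iff_ite]
  refine forall₂_congr fun i j => ?_
  rw [EuclideanSpace.inner_toLp_toLp, star_trivial, dotProduct_comm]
  rfl

theorem rankOneSum_transpose {m n K : ℕ} (d : Fin K → ℝ) (α : Fin K → Fin m → ℝ)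
    (β : Fin K → Fin n → ℝ) : (rankOneSum d α β)ᵀ = rankOneSum d β α := by
  simp [rankOneSum, transpose_sum]

theorem dotProduct_rankOneSum_mulVec {m n K : ℕ} (d : Fin K → ℝ) (α : Fin K → Fin m → ℝ)
    (β : Fin K → Fin n → ℝ) (x : Fin m → ℝ) (y : Fin n → ℝ) :
    x ⬝ᵥ (rankOneSum d α β *ᵥ y) = ∑ k, d k * ((x ⬝ᵥ α k) * (β k ⬝ᵥ y)) := by
  simp only [rankOneSum, sum_mulVec, dotProduct_sum, smul_mulVec, vecMulVec_mulVec,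
    op_smul_eq_smul, dotProduct_smul, smul_eq_mul]
  exact Finset.sum_congr rfl fun k _ => by ring

theorem OrthonormalFamily.dotProduct_rankOneSum_mulVec_self {m n r : ℕ} {u : Fin r → Fin m → ℝ}
    {v : Fin r → Fin n → ℝ} (hu : OrthonormalFamily u) (hv : OrthonormalFamily v)
    (σ : Fin r → ℝ) (j : Fin r) : u j ⬝ᵥ (rankOneSum σ u v *ᵥ v j) = σ j := by
  rw [dotProduct_rankOneSum_mulVec]
  simp [dotProduct, hu j, hv _ j]

theorem exists_svd_of_le {m n : ℕ} (A : Matrix (Fin m) (Fin n) ℝ) (h : n ≤ m) :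
    ∃ (σ : Fin n → ℝ) (u : Fin n → Fin m → ℝ) (v : Fin n → Fin n → ℝ),
      (∀ k, 0 ≤ σ k) ∧ OrthonormalFamily u ∧ OrthonormalFamily v ∧ rankOneSum σ u v = A := by
  have hA : (Aᵀ * A).IsHermitian := by simpa using isHermitian_conjTranspose_mul_self A
  set V := hA.eigenvectorBasis
  set w : Fin n → EuclideanSpace ℝ (Fin m) := fun j => toLp 2 (A *ᵥ V j)
  have hw : Pairwise fun i j => inner ℝ (w i) (w j) = 0 := fun i j hij => by
    change inner ℝ (toLp 2 _) (toLp 2 _) = (0 : ℝ)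
    rw [EuclideanSpace.inner_toLp_toLp, star_trivial, dotProduct_comm,
      A.dotProduct_mulVec_eigenvectorBasis hA, if_neg hij]
  obtain ⟨u, hu, hwu⟩ := exists_orthonormal_forall_eq_norm_smul (by simpa using h) hw
  refine ⟨fun j => ‖w j‖, fun j => ofLp (u j), fun j => ofLp (V j), fun j => norm_nonneg _,
    (orthonormalFamily_iff_orthonormal _).mpr hu,
    (orthonormalFamily_iff_orthonormal _).mpr V.orthonormal, ?_⟩
  conv_rhs => rw [A.eq_sum_vecMulVec_mulVec V]
  refine Finset.sum_congr rfl fun j _ => ?_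
  rw [← smul_vecMulVec]
  congr
  exact congrArg ofLp (hwu j).symm

theorem exists_svd {m n : ℕ} (A : Matrix (Fin m) (Fin n) ℝ) :
    ∃ (σ : Fin (min m n) → ℝ) (u : Fin (min m n) → Fin m → ℝ) (v : Fin (min m n) → Fin n → ℝ),
      (∀ k, 0 ≤ σ k) ∧ OrthonormalFamily u ∧ OrthonormalFamily v ∧ rankOneSum σ u v = A := by
  rcases le_total n m with h | h
  · rw [min_eq_right h]
    exact exists_svd_of_le A h
  · rw [min_eq_left h]
    obtain ⟨σ, v, u, hσ, hv, hu, hAt⟩ := exists_svd_of_le Aᵀ h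
    exact ⟨σ, u, v, hσ, hu, hv, by rw [← transpose_transpose A, ← hAt, rankOneSum_transpose]⟩

theorem sum_le_of_rankOneSum_eq {m n r K : ℕ} {σ : Fin r → ℝ} {u : Fin r → Fin m → ℝ}
    {v : Fin r → Fin n → ℝ} {d : Fin K → ℝ} {α : Fin K → Fin m → ℝ} {β : Fin K → Fin n → ℝ}
    (hu : OrthonormalFamily u) (hv : OrthonormalFamily v) (hd : ∀ k, 0 ≤ d k)
    (hα : ∀ k, l2norm (α k) ≤ 1) (hβ : ∀ k, l2norm (β k) ≤ 1)
    (h : rankOneSum σ u v = rankOneSum d α β) :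
    ∑ j, σ j ≤ ∑ k, d k := by
  have pairing_le_one : ∀ k, ∑ j, (u j ⬝ᵥ α k) * (β k ⬝ᵥ v j) ≤ 1 := fun k => by
    have := ((orthonormalFamily_iff_orthonormal u).mp hu).sum_inner_mul_inner_le
      ((orthonormalFamily_iff_orthonormal v).mp hv) (toLp 2 (α k)) (toLp 2 (β k))
    simp only [EuclideanSpace.inner_toLp_toLp, star_trivial, ← l2norm_eq_norm] at this
    calc ∑ j, (u j ⬝ᵥ α k) * (β k ⬝ᵥ v j) = ∑ j, (α k ⬝ᵥ u j) * (β k ⬝ᵥ v j) := by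
          simp only [dotProduct_comm (u _)]
      _ ≤ l2norm (α k) * l2norm (β k) := this
      _ ≤ 1 := mul_le_one₀ (hα k) (Real.sqrt_nonneg _) (hβ k)
  calc ∑ j, σ j = ∑ j, u j ⬝ᵥ (rankOneSum d α β *ᵥ v j) := by
        simp only [← h, hu.dotProduct_rankOneSum_mulVec_self hv]
    _ = ∑ k, d k * ∑ j, (u j ⬝ᵥ α k) * (β k ⬝ᵥ v j) := by
        simp only [dotProduct_rankOneSum_mulVec, Finset.mul_sum]
        exact Finset.sum_comm
    _ ≤ ∑ k, d k := Finset.sum_le_sum fun k _ => mul_le_of_le_one_right (hd k) (pairing_le_one k)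

theorem svd_replacement_lemma_general
    (m n K : ℕ) (r : ℕ) (hr : r = min m n)
    (d : Fin K → ℝ) (α : Fin K → Fin m → ℝ) (β : Fin K → Fin n → ℝ)
    (hd : ∀ k, 0 ≤ d k) (hα : ∀ k, l2norm (α k) ≤ 1) (hβ : ∀ k, l2norm (β k) ≤ 1) :
    ∃ (σ : Fin r → ℝ) (u : Fin r → Fin m → ℝ) (v : Fin r → Fin n → ℝ),
      (∀ k, 0 ≤ σ k) ∧ OrthonormalFamily u ∧ OrthonormalFamily v ∧
      rankOneSum σ u v = rankOneSum d α β ∧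
      (∑ k, σ k) ≤ ∑ k, d k := by
  subst hr
  obtain ⟨σ, u, v, hσ, hu, hv, hA⟩ := exists_svd (rankOneSum d α β)
  exact ⟨σ, u, v, hσ, hu, hv, hA, sum_le_of_rankOneSum_eq hu hv hd hα hβ hA⟩

/-- Replacement lemma: any feasible point of P2 can be replaced by an SVD-form
feasible point with objective value at least as small. -/
theorem svd_replacement_lemma
    (m n K : ℕ) (hm : 0 < m) (hn : 0 < n) (hK : 0 < K) (r : ℕ) (hr : r = min m n)
    (d : Fin K → ℝ) (α : Fin K → Fin m → ℝ) (β : Fin K → Fin n → ℝ)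
    (hd : ∀ k, 0 ≤ d k) (hα : ∀ k, l2norm (α k) ≤ 1) (hβ : ∀ k, l2norm (β k) ≤ 1) :
    ∃ (σ : Fin r → ℝ) (u : Fin r → Fin m → ℝ) (v : Fin r → Fin n → ℝ),
      (∀ k, 0 ≤ σ k) ∧ OrthonormalFamily u ∧ OrthonormalFamily v ∧
      rankOneSum σ u v = rankOneSum d α β ∧
      (∑ k, σ k) ≤ ∑ k, d k :=
  svd_replacement_lemma_general m n K r hr d α β hd hα hβ
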